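/- Let d ∈ {2,3}, let x_1,…,x_N be pairwise distinct points in ℝ^d with particle volumes V_1,…,V_N > 0, let w be a reference weight function, and h > 0. Let the index set be partitioned into fluid indices Λ_fl, surface indices Λ_sf and wall indices Λ_wl, and define, for i, j ∈ Λ_fl, Â_ij := −C_ij for i ≠ j and Â_ii := Σ_{l ∈ (Λ_fl ∪ Λ_sf) \ {i}} (V_l / V_i) C_il, where C_ij := −2 ẇ_h(|x_i − x_j|)/|x_i − x_j| (i ≠ j), C_ii := 0. Then for every vector α = (α_i)_{i ∈ Λ_fl} of reals, Σ_{i,j ∈ Λ_fl} α_i α_j Â_ij = Σ_{i<j, i,j ∈ Λ_fl} ((V_j α_i − V_i α_j)² / (V_i V_j)) C_ij + Σ_{i ∈ Λ_fl} α_i² Σ_{k ∈ Λ_sf} (V_k / V_i) C_ik; in particular this quadratic form is nonnegative. -/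

import Mathlib

open MeasureTheory Finset
open scoped BigOperators RealInnerProductSpace

noncomputable section

namespace ISPH

/-- Points of `ℝ^d`. -/
abbrev Pt (d : ℕ) := EuclideanSpace ℝ (Fin d)

/-- A reference weight function for dimension `d` with support radius `r₀`. -/
structure IsRefWeight (d : ℕ) (w : ℝ → ℝ) (r₀ : ℝ) : Prop where
  r0_pos : 0 < r₀
  smooth : ContDiffOn ℝ 2 w (Set.Ici 0)
  pos : ∀ r : ℝ, 0 < r → r < r₀ → 0 < w r
  eq_zero : ∀ r : ℝ, r₀ ≤ r → w r = 0
  deriv_neg : ∀ r : ℝ, 0 < r → r < r₀ → deriv w r < 0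
  deriv_zero : deriv w 0 = 0
  deriv_eq_zero : ∀ r : ℝ, r₀ ≤ r → deriv w r = 0
  unity : (∫ y : Pt d, w ‖y‖) = 1

/-- The scaled weight function `w_h`. -/
def wh (d : ℕ) (h : ℝ) (w : ℝ → ℝ) : ℝ → ℝ := fun r => (h ^ d)⁻¹ * w (r / h)

/-- `ẇ_h`, the derivative of the scaled weight function. -/
def dwh (d : ℕ) (h : ℝ) (w : ℝ → ℝ) : ℝ → ℝ := deriv (wh d h w)

variable {d N : ℕ}

/-- `∇w_h(|x i − x j|)`; equal to `0` when `i = j`. -/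
def gradW (x : Fin N → Pt d) (dw : ℝ → ℝ) (i j : Fin N) : Pt d :=
  (dw ‖x i - x j‖ / ‖x i - x j‖) • (x i - x j)

/-- `C i j = −2 ẇ_h(|x_i − x_j|)/|x_i − x_j|` off the diagonal, `0` on it. -/
def Cmat (x : Fin N → Pt d) (dw : ℝ → ℝ) (i j : Fin N) : ℝ :=
  if i = j then 0 else -2 * dw ‖x i - x j‖ / ‖x i - x j‖

/-- Discrete divergence over `Λ`. -/
def dDiv (x : Fin N → Pt d) (V : Fin N → ℝ) (dw : ℝ → ℝ) (Λ : Finset (Fin N))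
    (φ : Fin N → Pt d) (i : Fin N) : ℝ :=
  ∑ j ∈ Λ, V j * ⟪φ j + φ i, gradW x dw i j⟫

/-- Discrete gradient over `Λ`. -/
def dGrad (x : Fin N → Pt d) (V : Fin N → ℝ) (dw : ℝ → ℝ) (Λ : Finset (Fin N))
    (ψ : Fin N → ℝ) (i : Fin N) : Pt d :=
  ∑ j ∈ Λ, (V j * (ψ j - ψ i)) • gradW x dw i j

/-- Discrete Laplacian over `Λ` (for scalar- or vector-valued functions). -/
def dLap {F : Type*} [NormedAddCommGroup F] [NormedSpace ℝ F]
    (x : Fin N → Pt d) (V : Fin N → ℝ) (dw : ℝ → ℝ) (Λ : Finset (Fin N))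
    (φ : Fin N → F) (i : Fin N) : F :=
  (2 : ℝ) • ∑ j ∈ Λ.erase i,
    ((V j / ‖x i - x j‖) * ⟪‖x i - x j‖⁻¹ • (x i - x j), gradW x dw i j⟫) • (φ i - φ j)

/-- Discrete inner product over `Λ`. -/
def dInner {F : Type*} [NormedAddCommGroup F] [InnerProductSpace ℝ F]
    (V : Fin N → ℝ) (Λ : Finset (Fin N)) (φ ψ : Fin N → F) : ℝ :=
  ∑ i ∈ Λ, V i * ⟪φ i, ψ i⟫

/-- Square of the discrete `L²` norm over `Λ`. -/
def l2normSq {F : Type*} [NormedAddCommGroup F]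
    (V : Fin N → ℝ) (Λ : Finset (Fin N)) (φ : Fin N → F) : ℝ :=
  ∑ i ∈ Λ, V i * ‖φ i‖ ^ 2

/-- Discrete `L²` norm over `Λ`. -/
def l2norm {F : Type*} [NormedAddCommGroup F]
    (V : Fin N → ℝ) (Λ : Finset (Fin N)) (φ : Fin N → F) : ℝ :=
  Real.sqrt (l2normSq V Λ φ)

/-- Square of the discrete `H¹₀` seminorm over `Λ`. -/
def h1semiSq {F : Type*} [NormedAddCommGroup F]
    (x : Fin N → Pt d) (V : Fin N → ℝ) (dw : ℝ → ℝ) (Λ : Finset (Fin N))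
    (φ : Fin N → F) : ℝ :=
  ∑ i ∈ Λ, V i * ∑ j ∈ Λ.erase i,
    V j * (‖φ i - φ j‖ ^ 2 / ‖x i - x j‖) * |dw ‖x i - x j‖|

/-- Discrete `H¹₀` seminorm over `Λ`. -/
def h1semi {F : Type*} [NormedAddCommGroup F]
    (x : Fin N → Pt d) (V : Fin N → ℝ) (dw : ℝ → ℝ) (Λ : Finset (Fin N))
    (φ : Fin N → F) : ℝ :=
  Real.sqrt (h1semiSq x V dw Λ φ)

/-- Discrete `H₀⁻¹` seminorm over `Λ`. -/
def hm1semi {F : Type*} [NormedAddCommGroup F] [InnerProductSpace ℝ F]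
    (x : Fin N → Pt d) (V : Fin N → ℝ) (dw : ℝ → ℝ) (Λ : Finset (Fin N))
    (φ : Fin N → F) : ℝ :=
  sSup { r : ℝ | ∃ χ : Fin N → F, h1semi x V dw Λ χ ≠ 0 ∧
    r = dInner V Λ φ χ / h1semi x V dw Λ χ }

/-- There is a chain from `i` ending in `target`, with all indices before the last
one in `inter`, and consecutive distances strictly between `0` and `R`. -/
def Chain (x : Fin N → Pt d) (R : ℝ) (inter target : Finset (Fin N)) (i : Fin N) : Prop :=
  ∃ (ζ : ℕ) (c : ℕ → Fin N), c 0 = i ∧ (∀ l < ζ, c l ∈ inter) ∧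
    (∀ l < ζ, 0 < ‖x (c l) - x (c (l + 1))‖ ∧ ‖x (c l) - x (c (l + 1))‖ < R) ∧
    c ζ ∈ target

end ISPH

open ISPH

/-!
Write `Â i j = δ i j * D i - C i j`, where `D i` is the `V`-weighted row sum of `C` over fluid and
surface particles. As `C` is symmetric with zero diagonal, the fluid part of the quadratic form
pairs the terms `(i, j)` and `(j, i)` into `(V j α i - V i α j)² / (V i V j) * C i j`; the surface
part of `D` is what remains. Every term is nonnegative because `ẇ_h ≤ 0` makes `C` nonnegative.
-/

theorem Finset.sum_sum_eq_sum_sum_lt_add {ι M : Type*} [LinearOrder ι] [AddCommMonoid M]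
    (S : Finset ι) (f : ι → ι → M) (hdiag : ∀ i ∈ S, f i i = 0) :
    ∑ i ∈ S, ∑ j ∈ S, f i j = ∑ i ∈ S, ∑ j ∈ S with i < j, (f i j + f j i) := by
  have hlower : ∀ i ∈ S, ∑ j ∈ S with ¬ i < j, f i j = ∑ j ∈ S with j < i, f i j := by
    intro i hi
    refine (Finset.sum_subset (fun j hj => ?_) fun j hj hji => ?_).symm
    · simp only [Finset.mem_filter] at hj ⊢
      exact ⟨hj.1, hj.2.asymm⟩
    · have hij : ¬ j < i := fun h => hji (Finset.mem_filter.2 ⟨(Finset.mem_filter.1 hj).1, h⟩)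
      rw [le_antisymm (not_lt.1 (Finset.mem_filter.1 hj).2) (not_lt.1 hij)]
      exact hdiag i hi
  have hswap : ∑ i ∈ S, ∑ j ∈ S with j < i, f i j = ∑ i ∈ S, ∑ j ∈ S with i < j, f j i :=
    Finset.sum_comm' fun i j => by simp only [Finset.mem_filter]; tauto
  calc ∑ i ∈ S, ∑ j ∈ S, f i j
      = ∑ i ∈ S, (∑ j ∈ S with i < j, f i j + ∑ j ∈ S with ¬ i < j, f i j) :=
        Finset.sum_congr rfl fun i _ => (Finset.sum_filter_add_sum_filter_not _ _ _).symm
    _ = ∑ i ∈ S, ∑ j ∈ S with i < j, f i j + ∑ i ∈ S, ∑ j ∈ S with j < i, f i j := by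
        rw [Finset.sum_add_distrib, Finset.sum_congr rfl hlower]
    _ = ∑ i ∈ S, ∑ j ∈ S with i < j, (f i j + f j i) := by
        simp only [hswap, Finset.sum_add_distrib]

namespace ISPH

theorem IsRefWeight.deriv_nonpos {d : ℕ} {w : ℝ → ℝ} {r₀ : ℝ} (hw : IsRefWeight d w r₀)
    {t : ℝ} (ht : 0 ≤ t) : deriv w t ≤ 0 := by
  rcases ht.eq_or_lt with rfl | ht
  · exact hw.deriv_zero.le
  rcases lt_or_ge t r₀ with htr | htr
  · exact (hw.deriv_neg t ht htr).le
  · exact (hw.deriv_eq_zero t htr).le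

theorem dwh_eq (d : ℕ) (h : ℝ) (w : ℝ → ℝ) (r : ℝ) :
    dwh d h w r = (h ^ d)⁻¹ * (h⁻¹ * deriv w (h⁻¹ * r)) := by
  have hwh : wh d h w = fun s => (h ^ d)⁻¹ * w (h⁻¹ * s) := by
    funext s
    rw [wh, div_eq_inv_mul]
  rw [dwh, hwh, deriv_const_mul_field, deriv_comp_mul_left, smul_eq_mul]

theorem dwh_nonpos {d : ℕ} {w : ℝ → ℝ} {r₀ : ℝ} (hw : IsRefWeight d w r₀) {h r : ℝ}
    (hh : 0 < h) (hr : 0 ≤ r) : dwh d h w r ≤ 0 := by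
  rw [dwh_eq]
  exact mul_nonpos_of_nonneg_of_nonpos (by positivity)
    (mul_nonpos_of_nonneg_of_nonpos (by positivity) (hw.deriv_nonpos (by positivity)))

section Cmat

variable {d N : ℕ} (x : Fin N → Pt d) (dw : ℝ → ℝ)

theorem Cmat_self (i : Fin N) : Cmat x dw i i = 0 := if_pos rfl

theorem Cmat_comm (i j : Fin N) : Cmat x dw i j = Cmat x dw j i := by
  by_cases hij : i = j
  · rw [hij]
  · simp only [Cmat, hij, Ne.symm hij, if_false, norm_sub_rev (x i) (x j)]

theorem Cmat_nonneg (hdw : ∀ r, 0 ≤ r → dw r ≤ 0) (i j : Fin N) : 0 ≤ Cmat x dw i j := by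
  unfold Cmat
  split_ifs
  · exact le_rfl
  · exact div_nonneg (by linarith [hdw _ (norm_nonneg (x i - x j))]) (norm_nonneg _)

end Cmat

end ISPH

section PoissonQuadForm

variable {ι : Type*} [LinearOrder ι] (S T : Finset ι) (V : ι → ℝ) (C A : ι → ι → ℝ)

/-- On `S × S`, `A` is the `V`-weighted graph Laplacian of `C` on `S ∪ T`: the nodes of `T`
carry a homogeneous Dirichlet condition, so they enter only through the diagonal. -/
def IsDirichletLaplacian : Prop :=
  ∀ i ∈ S, ∀ j ∈ S, A i j =
    if i = j then ∑ l ∈ (S ∪ T).erase i, (V l / V i) * C i l else -C i j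

variable {S T V C A}

theorem IsDirichletLaplacian.apply (hA : IsDirichletLaplacian S T V C A)
    (hST : Disjoint S T) (hdiag : ∀ i, C i i = 0) {i j : ι} (hi : i ∈ S) (hj : j ∈ S) :
    A i j = (if i = j then ∑ l ∈ S, (V l / V i) * C i l + ∑ k ∈ T, (V k / V i) * C i k
      else 0) - C i j := by
  rw [hA i hi j hj]
  split_ifs with hij
  · subst hij
    rw [Finset.sum_erase _ (by rw [hdiag, mul_zero]),
      Finset.sum_union hST, hdiag, sub_zero]
  · rw [zero_sub]

theorem IsDirichletLaplacian.quadForm_eq (hA : IsDirichletLaplacian S T V C A)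
    (hST : Disjoint S T) (hV : ∀ i, V i ≠ 0) (hdiag : ∀ i, C i i = 0)
    (hsymm : ∀ i j, C i j = C j i) (α : ι → ℝ) :
    ∑ i ∈ S, ∑ j ∈ S, α i * α j * A i j =
      ∑ i ∈ S, ∑ j ∈ S with i < j, ((V j * α i - V i * α j) ^ 2 / (V i * V j)) * C i j +
      ∑ i ∈ S, α i ^ 2 * ∑ k ∈ T, (V k / V i) * C i k := by
  have hrow : ∀ i ∈ S, ∑ j ∈ S, α i * α j * A i j =
      ∑ j ∈ S, (α i ^ 2 * (V j / V i) - α i * α j) * C i j +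
      α i ^ 2 * ∑ k ∈ T, (V k / V i) * C i k := by
    intro i hi
    rw [Finset.sum_congr rfl fun j hj => congrArg (α i * α j * ·) (hA.apply hST hdiag hi hj)]
    simp only [mul_sub, mul_ite, mul_zero, Finset.sum_sub_distrib, Finset.sum_ite_eq, if_pos hi,
      sub_mul, mul_add, Finset.mul_sum]
    simp only [sq, mul_assoc]
    ring
  have hpair : ∀ i j, (α i ^ 2 * (V j / V i) - α i * α j) * C i j +
      (α j ^ 2 * (V i / V j) - α j * α i) * C j i =
      ((V j * α i - V i * α j) ^ 2 / (V i * V j)) * C i j := by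
    intro i j
    rw [hsymm j i]
    field_simp [hV i, hV j]
    ring
  rw [Finset.sum_congr rfl hrow, Finset.sum_add_distrib,
    Finset.sum_sum_eq_sum_sum_lt_add S _ fun i _ => by rw [hdiag, mul_zero]]
  simp only [hpair]

theorem IsDirichletLaplacian.quadForm_nonneg (hA : IsDirichletLaplacian S T V C A)
    (hST : Disjoint S T) (hV : ∀ i, 0 < V i) (hC : ∀ i j, 0 ≤ C i j)
    (hdiag : ∀ i, C i i = 0) (hsymm : ∀ i j, C i j = C j i) (α : ι → ℝ) :
    0 ≤ ∑ i ∈ S, ∑ j ∈ S, α i * α j * A i j := by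
  rw [hA.quadForm_eq hST (fun i => (hV i).ne') hdiag hsymm]
  have hVV : ∀ i j, 0 ≤ V i / V j := fun i j => div_nonneg (hV i).le (hV j).le
  have hVV' : ∀ i j, 0 ≤ V i * V j := fun i j => mul_nonneg (hV i).le (hV j).le
  exact add_nonneg
    (Finset.sum_nonneg fun i _ => Finset.sum_nonneg fun j _ =>
      mul_nonneg (div_nonneg (sq_nonneg _) (hVV' i j)) (hC i j))
    (Finset.sum_nonneg fun i _ => mul_nonneg (sq_nonneg _)
      (Finset.sum_nonneg fun k _ => mul_nonneg (hVV k i) (hC i k)))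

end PoissonQuadForm

theorem statement1_general (d N : ℕ)
    (x : Fin N → Pt d)
    (V : Fin N → ℝ) (hV : ∀ i, 0 < V i)
    (w : ℝ → ℝ) (r₀ : ℝ) (hw : IsRefWeight d w r₀)
    (h : ℝ) (hh : 0 < h)
    (Λfl Λsf : Finset (Fin N))
    (hd1 : Disjoint Λfl Λsf)
    (Ahat : Fin N → Fin N → ℝ)
    (hAhat : ∀ i ∈ Λfl, ∀ j ∈ Λfl, Ahat i j =
      if i = j then ∑ l ∈ (Λfl ∪ Λsf).erase i, (V l / V i) * Cmat x (dwh d h w) i l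
      else -(Cmat x (dwh d h w) i j))
    (α : Fin N → ℝ) :
    (∑ i ∈ Λfl, ∑ j ∈ Λfl, α i * α j * Ahat i j =
      (∑ i ∈ Λfl, ∑ j ∈ Λfl.filter (fun j => i < j),
        ((V j * α i - V i * α j) ^ 2 / (V i * V j)) * Cmat x (dwh d h w) i j) +
      ∑ i ∈ Λfl, α i ^ 2 * ∑ k ∈ Λsf, (V k / V i) * Cmat x (dwh d h w) i k) ∧
    0 ≤ ∑ i ∈ Λfl, ∑ j ∈ Λfl, α i * α j * Ahat i j := by
  have hA : IsDirichletLaplacian Λfl Λsf V (Cmat x (dwh d h w)) Ahat := hAhat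
  have hC : ∀ i j, 0 ≤ Cmat x (dwh d h w) i j :=
    Cmat_nonneg x _ fun _ hr => dwh_nonpos hw hh hr
  exact ⟨hA.quadForm_eq hd1 (fun i => (hV i).ne') (Cmat_self x _) (Cmat_comm x _) α,
    hA.quadForm_nonneg hd1 hV hC (Cmat_self x _) (Cmat_comm x _) α⟩

/-- the quadratic form of the pressure Poisson matrix of the ISPH
method is a sum of nonnegative terms, and in particular nonnegative. -/
theorem statement1 (d N : ℕ) (hd : d = 2 ∨ d = 3)
    (x : Fin N → Pt d) (hx : Function.Injective x)
    (V : Fin N → ℝ) (hV : ∀ i, 0 < V i)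
    (w : ℝ → ℝ) (r₀ : ℝ) (hw : IsRefWeight d w r₀)
    (h : ℝ) (hh : 0 < h)
    (Λfl Λsf Λwl : Finset (Fin N))
    (hd1 : Disjoint Λfl Λsf) (hd2 : Disjoint Λfl Λwl) (hd3 : Disjoint Λsf Λwl)
    (hcover : Λfl ∪ Λsf ∪ Λwl = Finset.univ)
    (Ahat : Fin N → Fin N → ℝ)
    (hAhat : ∀ i ∈ Λfl, ∀ j ∈ Λfl, Ahat i j =
      if i = j then ∑ l ∈ (Λfl ∪ Λsf).erase i, (V l / V i) * Cmat x (dwh d h w) i l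
      else -(Cmat x (dwh d h w) i j))
    (α : Fin N → ℝ) :
    (∑ i ∈ Λfl, ∑ j ∈ Λfl, α i * α j * Ahat i j =
      (∑ i ∈ Λfl, ∑ j ∈ Λfl.filter (fun j => i < j),
        ((V j * α i - V i * α j) ^ 2 / (V i * V j)) * Cmat x (dwh d h w) i j) +
      ∑ i ∈ Λfl, α i ^ 2 * ∑ k ∈ Λsf, (V k / V i) * Cmat x (dwh d h w) i k) ∧
    0 ≤ ∑ i ∈ Λfl, ∑ j ∈ Λfl, α i * α j * Ahat i j :=
  statement1_general d N x V hV w r₀ hw h hh Λfl Λsf hd1 Ahat hAhat α
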